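/- arXiv:2501.03168 — 3 statements merged into one kernel-verified Lean document; each statement's English description precedes it below -/
import Mathlib

section
/- Let N ≥ 2 be an integer. Then along the infinitesimal Moser sequence w_j one has I_1(w_j) = ∫₀¹ exp( log(e/s) · w_j(s)^N / s^{N−1} ) ds → 1 = I_1(0) as j → ∞; i.e. the critical Limiting-Bliss functional I_1 is continuous along the infinitesimal Moser sequence, which converges weakly to 0. -/
open MeasureTheory Real Set Filter

/-- The Limiting-Bliss functional `I_β`. -/
noncomputable def Ifun (N : ℕ) (β : ℝ) (v : ℝ → ℝ) : ℝ :=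
  ∫ s in Set.Ioc (0:ℝ) 1,
    Real.exp (β * Real.log (Real.exp 1 / s) * (v s ^ N / s ^ (N - 1)))

/-- The infinitesimal Moser sequence `w_j`. -/
noncomputable def moser (N j : ℕ) (t : ℝ) : ℝ :=
  if t ≤ 1 / (j : ℝ) then (j : ℝ) ^ ((1:ℝ) / N) * t
  else (j : ℝ) ^ (-(((N:ℝ) - 1) / N))

/-!
Every integrand value is at least `1`, so `I_1(w_j) ≥ 1`. For the upper bound put `t = j s` and
`M = 1 + log j`: the exponent equals `M t - t log t ≤ M t + 1` for `s ≤ 1/j` and is at most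
`M / t` beyond. Splitting `(0, 1]` at `1/j`, `2/j` and `M²/j` bounds the four pieces by `e² / M`,
`2e / M`, `e M² e^{-M/2}` and `e^{1/M}`, which tends to `1` as `j → ∞`.
-/

open Topology

lemma Ifun_zero {N : ℕ} (hN : N ≠ 0) (β : ℝ) : Ifun N β (fun _ => 0) = 1 := by
  simp [Ifun, zero_pow hN]

noncomputable def moserIntegrand (N j : ℕ) (s : ℝ) : ℝ :=
  exp (log (exp 1 / s) * (moser N j s ^ N / s ^ (N - 1)))

lemma Ifun_one_moser_eq_integral (N j : ℕ) :
    Ifun N 1 (moser N j) = ∫ s in (0:ℝ)..1, moserIntegrand N j s := by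
  simp [intervalIntegral.integral_of_le, Ifun, moserIntegrand]

lemma log_exp_one_div {s : ℝ} (hs : 0 < s) : log (exp 1 / s) = 1 - log s := by
  rw [log_div (exp_ne_zero 1) hs.ne', log_exp]

lemma measurable_moser (N j : ℕ) : Measurable (moser N j) :=
  Measurable.ite (measurableSet_le measurable_id measurable_const)
    (measurable_id.const_mul _) measurable_const

lemma measurable_moserIntegrand (N j : ℕ) : Measurable (moserIntegrand N j) := by
  have := measurable_moser N j
  unfold moserIntegrand
  fun_prop

lemma moser_nonneg (N j : ℕ) {t : ℝ} (ht : 0 ≤ t) : 0 ≤ moser N j t := by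
  unfold moser
  split_ifs <;> positivity

lemma moser_pow_div_pow_of_le {N : ℕ} (hN : N ≠ 0) (j : ℕ) {s : ℝ} (hs : 0 < s)
    (hsj : s ≤ 1 / j) : moser N j s ^ N / s ^ (N - 1) = j * s := by
  have hjN : ((j : ℝ) ^ ((1 : ℝ) / N)) ^ N = j := by
    rw [← rpow_natCast, ← rpow_mul (Nat.cast_nonneg j),
      one_div_mul_cancel (by exact_mod_cast hN), rpow_one]
  rw [moser, if_pos hsj, mul_pow, hjN, ← pow_sub_one_mul hN s, ← mul_assoc, mul_comm _ (s ^ _),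
    mul_assoc, mul_div_cancel_left₀ _ (pow_ne_zero _ hs.ne')]

lemma moser_pow_div_pow_of_lt {N : ℕ} (hN : N ≠ 0) {j : ℕ} {s : ℝ} (hsj : 1 / j < s) :
    moser N j s ^ N / s ^ (N - 1) = ((j * s) ^ (N - 1))⁻¹ := by
  have hexp : -(((N : ℝ) - 1) / N) * N = -((N - 1 : ℕ) : ℝ) := by
    rw [Nat.cast_sub (Nat.one_le_iff_ne_zero.2 hN)]
    field_simp
    simp
  rw [moser, if_neg hsj.not_ge, ← rpow_natCast _ N, ← rpow_mul (Nat.cast_nonneg j), hexp,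
    rpow_neg (Nat.cast_nonneg j), rpow_natCast, mul_pow, mul_inv, div_eq_mul_inv]

lemma one_le_moserIntegrand (N j : ℕ) {s : ℝ} (hs : 0 < s) (hs1 : s ≤ 1) :
    1 ≤ moserIntegrand N j s := by
  have hlog : 0 ≤ 1 - log s := by linarith [log_nonpos hs.le hs1]
  rw [moserIntegrand, log_exp_one_div hs]
  exact one_le_exp (mul_nonneg hlog (by have := moser_nonneg N j hs.le; positivity))

/-- On `(0, 1/j]`, with `t = j s`, the exponent is `(1 + log j) t - t log t`, and
`-t log t ≤ 1 - t`. -/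
lemma moserIntegrand_le_of_le {N : ℕ} (hN : N ≠ 0) {j : ℕ} {s : ℝ} (hs : 0 < s)
    (hsj : s ≤ 1 / j) : moserIntegrand N j s ≤ exp ((1 + log j) * (j * s) + 1) := by
  have hj : (0 : ℝ) < j := one_div_pos.mp (hs.trans_le hsj)
  have hts := self_sub_one_le_mul_log (mul_pos hj hs).le
  rw [log_mul hj.ne' hs.ne'] at hts
  rw [moserIntegrand, moser_pow_div_pow_of_le hN j hs hsj, log_exp_one_div hs]
  gcongr
  nlinarith [mul_pos hj hs]

lemma moserIntegrand_le_of_lt {N : ℕ} (hN : N ≠ 0) {j : ℕ} (hj : 0 < j) {s : ℝ}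
    (hsj : 1 / j < s) : moserIntegrand N j s ≤ exp ((1 + log j) / (j * s) ^ (N - 1)) := by
  have hj' : (0 : ℝ) < j := by exact_mod_cast hj
  have hs : 0 < s := (one_div_pos.2 hj').trans hsj
  have hlog : 1 - log s ≤ 1 + log j := by
    have := log_le_log (one_div_pos.2 hj') hsj.le
    rw [one_div, log_inv] at this
    linarith
  rw [moserIntegrand, moser_pow_div_pow_of_lt hN hsj, log_exp_one_div hs, ← div_eq_mul_inv]
  gcongr

lemma moserIntegrand_le_exp_div {N : ℕ} (hN : 2 ≤ N) {j : ℕ} (hj : 0 < j) {s : ℝ}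
    (hsj : 1 / j < s) : moserIntegrand N j s ≤ exp ((1 + log j) / (j * s)) := by
  have hjs : 1 ≤ (j : ℝ) * s := by
    rw [one_div, inv_lt_iff_one_lt_mul₀ (by positivity), mul_comm] at hsj
    exact hsj.le
  refine (moserIntegrand_le_of_lt (by omega) hj hsj).trans ?_
  gcongr
  exact le_self_pow₀ hjs (by omega)

lemma moserIntegrand_le {N : ℕ} (hN : N ≠ 0) {j : ℕ} (hj : 0 < j) {s : ℝ}
    (hs : s ∈ Ioc 0 1) : moserIntegrand N j s ≤ exp (2 + log j) := by
  have hM : 0 ≤ 1 + log j := by positivity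
  rcases le_or_gt s (1 / j) with hsj | hsj
  · refine (moserIntegrand_le_of_le hN hs.1 hsj).trans (exp_le_exp.2 ?_)
    have : (j : ℝ) * s ≤ 1 := by rwa [le_div_iff₀ (by positivity), mul_comm] at hsj
    nlinarith
  · refine (moserIntegrand_le_of_lt hN hj hsj).trans (exp_le_exp.2 ?_)
    have : 1 ≤ ((j : ℝ) * s) ^ (N - 1) := by
      rw [one_div, inv_lt_iff_one_lt_mul₀ (by positivity), mul_comm] at hsj
      exact one_le_pow₀ hsj.le
    linarith [div_le_self hM this]

lemma integrableOn_moserIntegrand {N : ℕ} (hN : N ≠ 0) {j : ℕ} (hj : 0 < j) :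
    IntegrableOn (moserIntegrand N j) (Ioc 0 1) := by
  refine Integrable.mono' (integrableOn_const measure_Ioc_lt_top.ne (C := exp (2 + log j)))
    (measurable_moserIntegrand N j).aestronglyMeasurable.restrict
    ((ae_restrict_iff' measurableSet_Ioc).2 (ae_of_all _ fun s hs => ?_))
  rw [Real.norm_of_nonneg (by unfold moserIntegrand; positivity)]
  exact moserIntegrand_le hN hj hs

lemma intervalIntegrable_moserIntegrand {N : ℕ} (hN : N ≠ 0) {j : ℕ} (hj : 0 < j) {a b : ℝ}
    (ha : 0 ≤ a) (hab : a ≤ b) (hb : b ≤ 1) :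
    IntervalIntegrable (moserIntegrand N j) volume a b :=
  (intervalIntegrable_iff_integrableOn_Ioc_of_le hab).2
    ((integrableOn_moserIntegrand hN hj).mono_set (Ioc_subset_Ioc ha hb))

lemma one_le_Ifun_one_moser {N : ℕ} (hN : N ≠ 0) {j : ℕ} (hj : 0 < j) :
    1 ≤ Ifun N 1 (moser N j) := by
  rw [Ifun_one_moser_eq_integral]
  calc (1 : ℝ) = ∫ _ in (0 : ℝ)..1, (1 : ℝ) := by simp
    _ ≤ _ := intervalIntegral.integral_mono_on_of_le_Ioo zero_le_one (by simp)
        (intervalIntegrable_moserIntegrand hN hj le_rfl zero_le_one le_rfl)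
        fun s hs => one_le_moserIntegrand N j hs.1 hs.2.le

lemma integral_exp_mul_add {p : ℝ} (hp : p ≠ 0) (q a b : ℝ) :
    ∫ x in a..b, exp (p * x + q) = (exp (p * b + q) - exp (p * a + q)) / p := by
  rw [intervalIntegral.integral_comp_mul_add exp hp q, integral_exp, smul_eq_mul, inv_mul_eq_div]

lemma integral_exp_mul_add_le_of_pos {p : ℝ} (hp : 0 < p) (q a b : ℝ) :
    ∫ x in a..b, exp (p * x + q) ≤ exp (p * b + q) / p := by
  rw [integral_exp_mul_add hp.ne']
  gcongr
  exact sub_le_self _ (exp_pos _).le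

lemma integral_exp_mul_add_le_of_neg {p : ℝ} (hp : p < 0) (q a b : ℝ) :
    ∫ x in a..b, exp (p * x + q) ≤ exp (p * a + q) / -p := by
  rw [integral_exp_mul_add hp.ne, ← neg_div_neg_eq, neg_sub]
  gcongr
  · linarith
  · exact sub_le_self _ (exp_pos _).le

lemma integral_moserIntegrand_zero_le {N : ℕ} (hN : N ≠ 0) {j : ℕ} (hj : 0 < j) :
    ∫ s in (0 : ℝ)..1 / j, moserIntegrand N j s ≤ exp 2 / (1 + log j) := by
  have hj' : (0 : ℝ) < j := by exact_mod_cast hj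
  have hM : 0 < 1 + log j := by positivity
  have hcont : Continuous fun s : ℝ => exp ((1 + log j) * j * s + 1) := by fun_prop
  calc ∫ s in (0 : ℝ)..1 / j, moserIntegrand N j s
      ≤ ∫ s in (0 : ℝ)..1 / j, exp ((1 + log j) * j * s + 1) :=
        intervalIntegral.integral_mono_on_of_le_Ioo (by positivity)
          (intervalIntegrable_moserIntegrand hN hj le_rfl (by positivity)
            (div_le_one_of_le₀ (Nat.one_le_cast.2 hj) hj'.le))
          (hcont.intervalIntegrable _ _)
          fun s hs => (moserIntegrand_le_of_le hN hs.1 hs.2.le).trans_eq (by ring_nf)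
    _ ≤ exp ((1 + log j) * j * (1 / j) + 1) / ((1 + log j) * j) :=
        integral_exp_mul_add_le_of_pos (by positivity) _ _ _
    _ = exp 2 / (1 + log j) := by
        rw [mul_assoc, mul_one_div_cancel hj'.ne', mul_one, add_comm, ← add_assoc, exp_add,
          exp_log hj', one_add_one_eq_two]
        field_simp

/-- On `(1/j, 2/j]` the bound `exp ((1 + log j) / (j s))` is dominated by the exponential of its
chord over `j s ∈ [1, 2]`, since `1 / t ≤ (3 - t) / 2` there. -/
lemma integral_moserIntegrand_one_div_le {N : ℕ} (hN : 2 ≤ N) {j : ℕ} (hj : 2 ≤ j) :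
    ∫ s in (1 / j : ℝ)..2 / j, moserIntegrand N j s ≤ 2 * exp 1 / (1 + log j) := by
  have hj' : (2 : ℝ) ≤ j := by exact_mod_cast hj
  have hM : 0 < 1 + log j := by positivity
  set p := -((1 + log j) * j / 2) with hp_def
  have hcont : Continuous fun s : ℝ => exp (p * s + 3 * (1 + log j) / 2) := by fun_prop
  calc ∫ s in (1 / j : ℝ)..2 / j, moserIntegrand N j s
      ≤ ∫ s in (1 / j : ℝ)..2 / j, exp (p * s + 3 * (1 + log j) / 2) := by
        refine intervalIntegral.integral_mono_on_of_le_Ioo (by gcongr; norm_num)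
          (intervalIntegrable_moserIntegrand (by omega) (by omega) (by positivity)
            (by gcongr; norm_num) (by rwa [div_le_one (by positivity)]))
          (hcont.intervalIntegrable _ _) fun s hs => ?_
        have ht1 : 1 < (j : ℝ) * s := (div_lt_iff₀' (by positivity)).1 hs.1
        have ht2 : (j : ℝ) * s < 2 := (lt_div_iff₀' (by positivity)).1 hs.2
        refine (moserIntegrand_le_exp_div hN (by omega) hs.1).trans (exp_le_exp.2 ?_)
        have hchord : 1 / ((j : ℝ) * s) ≤ (3 - j * s) / 2 := by
          rw [div_le_div_iff₀ (by positivity) two_pos]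
          nlinarith
        calc (1 + log j) / (j * s) = (1 + log j) * (1 / (j * s)) := by ring
          _ ≤ (1 + log j) * ((3 - j * s) / 2) := by gcongr
          _ = p * s + 3 * (1 + log j) / 2 := by ring
    _ ≤ exp (p * (1 / j) + 3 * (1 + log j) / 2) / -p :=
        integral_exp_mul_add_le_of_neg (by rw [hp_def, neg_lt_zero]; positivity) _ _ _
    _ = 2 * exp 1 / (1 + log j) := by
        have hp : p * (1 / j) + 3 * (1 + log j) / 2 = 1 + log j := by
          field_simp
          ring
        rw [hp, exp_add, exp_log (by positivity), hp_def]
        field_simp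

lemma integral_moserIntegrand_le_mul_exp {N : ℕ} (hN : 2 ≤ N) {j : ℕ} (hj : 0 < j) {a b : ℝ}
    (ha : 1 / j ≤ a) (hab : a ≤ b) (hb : b ≤ 1) :
    ∫ s in a..b, moserIntegrand N j s ≤ (b - a) * exp ((1 + log j) / (j * a)) := by
  have hj' : (0 : ℝ) < j := by exact_mod_cast hj
  have ha0 : 0 < a := (one_div_pos.2 hj').trans_le ha
  calc ∫ s in a..b, moserIntegrand N j s ≤ ∫ _ in a..b, exp ((1 + log j) / (j * a)) :=
        intervalIntegral.integral_mono_on_of_le_Ioo hab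
          (intervalIntegrable_moserIntegrand (by omega) hj (by positivity) hab hb) (by simp)
          fun s hs => (moserIntegrand_le_exp_div hN hj (ha.trans_lt hs.1)).trans
            (by gcongr; exact hs.1.le)
    _ = (b - a) * exp ((1 + log j) / (j * a)) := by simp

noncomputable def moserBound (m : ℝ) : ℝ :=
  (exp 2 + 2 * exp 1) / m + exp 1 * (m ^ 2 * exp (-(1 / 2) * m)) + exp (1 / m)

lemma tendsto_moserBound : Tendsto moserBound atTop (𝓝 1) := by
  have hinv : Tendsto (fun m : ℝ => 1 / m) atTop (𝓝 0) :=
    tendsto_const_nhds.div_atTop tendsto_id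
  have hsq : Tendsto (fun m : ℝ => m ^ 2 * exp (-(1 / 2) * m)) atTop (𝓝 0) := by
    simpa only [rpow_two] using tendsto_rpow_mul_exp_neg_mul_atTop_nhds_zero 2 (1 / 2) one_half_pos
  have h := ((tendsto_const_nhds (x := exp 2 + 2 * exp 1)).div_atTop tendsto_id).add
    (hsq.const_mul (exp 1)) |>.add ((continuous_exp.tendsto 0).comp hinv)
  simp only [mul_zero, add_zero, exp_zero, zero_add] at h
  exact h

lemma eventually_sq_le_exp_sub_one : ∀ᶠ m : ℝ in atTop, m ^ 2 ≤ exp (m - 1) := by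
  filter_upwards [(tendsto_pow_mul_exp_neg_atTop_nhds_zero 2).eventually
    (gt_mem_nhds (exp_pos (-1)))] with m hm
  calc m ^ 2 = m ^ 2 * exp (-m) * exp m := by
        rw [mul_assoc, ← exp_add, neg_add_cancel, exp_zero, mul_one]
    _ ≤ exp (-1) * exp m := by gcongr
    _ = exp (m - 1) := by rw [← exp_add]; ring_nf

/-- Split at `M²/j`, where `M = 1 + log j`; the two pieces are bounded by `exp (M / 2)` and
`exp (1 / M)` times their lengths, and `j = exp (M - 1)`. -/
lemma integral_moserIntegrand_two_div_le {N : ℕ} (hN : 2 ≤ N) {j : ℕ}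
    (h2 : 2 ≤ (1 + log j) ^ 2) (hj : (1 + log j) ^ 2 ≤ j) :
    ∫ s in (2 / j : ℝ)..1, moserIntegrand N j s ≤
      exp 1 * ((1 + log j) ^ 2 * exp (-(1 / 2) * (1 + log j))) + exp (1 / (1 + log j)) := by
  have hj' : (0 : ℝ) < j := by linarith
  have hj0 : 0 < j := by exact_mod_cast hj'
  set M := 1 + log j with hM_def
  have hM : 0 < M := by positivity
  have h2M : 2 / j ≤ M ^ 2 / j := by gcongr
  have hM1 : M ^ 2 / j ≤ 1 := by rwa [div_le_one hj']
  have h1j : 1 / j ≤ 2 / (j : ℝ) := by gcongr; norm_num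
  have hmiddle : (M ^ 2 / j - 2 / j) * exp (M / (j * (2 / j))) ≤
      exp 1 * (M ^ 2 * exp (-(1 / 2) * M)) := by
    have hjexp : (j : ℝ) = exp (M - 1) := by rw [hM_def, add_sub_cancel_left, exp_log hj']
    calc (M ^ 2 / j - 2 / j) * exp (M / (j * (2 / j))) ≤ M ^ 2 / j * exp (M / 2) := by
          rw [mul_div_cancel₀ _ hj'.ne']
          gcongr
          linarith [div_pos two_pos hj']
      _ = exp 1 * (M ^ 2 * exp (-(1 / 2) * M)) := by
          rw [hjexp, div_eq_mul_inv, ← exp_neg, mul_assoc, ← exp_add, mul_left_comm,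
            ← exp_add]
          ring_nf
  have hlast : (1 - M ^ 2 / j) * exp (M / (j * (M ^ 2 / j))) ≤ exp (1 / M) := by
    have hpos : 0 ≤ M ^ 2 / j := by positivity
    rw [mul_div_cancel₀ _ hj'.ne', show M / M ^ 2 = 1 / M by field_simp]
    exact mul_le_of_le_one_left (exp_pos _).le (by linarith)
  rw [← intervalIntegral.integral_add_adjacent_intervals
    (intervalIntegrable_moserIntegrand (by omega) hj0 (by positivity) h2M hM1)
    (intervalIntegrable_moserIntegrand (by omega) hj0 (by positivity) hM1 le_rfl)]
  gcongr ?_ + ?_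
  · exact (integral_moserIntegrand_le_mul_exp hN hj0 h1j h2M hM1).trans hmiddle
  · exact (integral_moserIntegrand_le_mul_exp hN hj0 (h1j.trans h2M) hM1 le_rfl).trans hlast

lemma Ifun_one_moser_le {N : ℕ} (hN : 2 ≤ N) {j : ℕ} (h2 : 2 ≤ (1 + log j) ^ 2)
    (hj : (1 + log j) ^ 2 ≤ j) : Ifun N 1 (moser N j) ≤ moserBound (1 + log j) := by
  have hj2 : 2 ≤ j := by exact_mod_cast h2.trans hj
  have hj' : (2 : ℝ) ≤ j := by exact_mod_cast hj2
  have hintegrable {a b : ℝ} (ha : 0 ≤ a) (hab : a ≤ b) (hb : b ≤ 1) :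
      IntervalIntegrable (moserIntegrand N j) volume a b :=
    intervalIntegrable_moserIntegrand (by omega) (by omega) ha hab hb
  have h12 : (1 : ℝ) / j ≤ 2 / j := by gcongr; norm_num
  have h21 : 2 / (j : ℝ) ≤ 1 := by rwa [div_le_one (by positivity)]
  rw [Ifun_one_moser_eq_integral, ← intervalIntegral.integral_add_adjacent_intervals
      (hintegrable le_rfl (by positivity) h21) (hintegrable (by positivity) h21 le_rfl),
    ← intervalIntegral.integral_add_adjacent_intervals
      (hintegrable le_rfl (by positivity) (h12.trans h21)) (hintegrable (by positivity) h12 h21),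
    moserBound, add_div, add_assoc _ (exp 1 * _)]
  gcongr ?_ + ?_ + ?_
  · exact integral_moserIntegrand_zero_le (by omega) (by omega)
  · exact integral_moserIntegrand_one_div_le hN hj2
  · exact integral_moserIntegrand_two_div_le hN h2 hj

/-- the critical Limiting-Bliss functional `I_1` is continuous along the
infinitesimal Moser sequence: `I_1 (w_j) → 1 = I_1(0)` as `j → ∞`. -/
theorem Ifun_one_moser_tendsto_one (N : ℕ) (hN : 2 ≤ N) :
    Filter.Tendsto (fun j : ℕ => Ifun N 1 (moser N j)) Filter.atTop (nhds 1) ∧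
    Ifun N 1 (fun _ => 0) = 1 := by
  have hM : Tendsto (fun j : ℕ => 1 + log j) atTop atTop :=
    tendsto_atTop_add_const_left _ 1 (tendsto_log_atTop.comp tendsto_natCast_atTop_atTop)
  refine ⟨tendsto_of_tendsto_of_tendsto_of_le_of_le' tendsto_const_nhds
    (tendsto_moserBound.comp hM) ?_ ?_, Ifun_zero (by omega) 1⟩
  · filter_upwards [eventually_gt_atTop 0] with j hj using one_le_Ifun_one_moser (by omega) hj
  · filter_upwards [hM.eventually_ge_atTop 2, hM.eventually eventually_sq_le_exp_sub_one,
      eventually_gt_atTop 0] with j h2 hsq hj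
    refine Ifun_one_moser_le hN (by nlinarith) ?_
    rwa [add_sub_cancel_left, exp_log (by exact_mod_cast hj)] at hsq
end

section
/- Let N ≥ 2 be an integer and 0 < β < 1. Then sup_{v ∈ E_N} ∫₀¹ exp( β · log(e/s) · v(s)^N / s^{N−1} ) ds < ∞; i.e. there is a constant C(N,β) such that ∫₀¹ e^{β (log(e/s)) v^N(s)/s^{N−1}} ds ≤ C(N,β) for all v ∈ E_N (Limiting-Bliss inequality in the subcritical range, proved via termwise application of the Bliss inequalities to the Taylor expansion of the exponential). -/
/-!
Hölder's inequality gives `|v(s)| ≤ ∫₀ˢ |v'| ≤ s^{1-1/N} ‖v'‖_N = s^{1-1/N}`, so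
`v(s)^N / s^{N-1} ≤ 1` and the integrand is at most `exp (β log (e/s)) = e^β s^{-β}`,
which is integrable on `(0, 1]` because `β < 1`.
-/

open MeasureTheory Real Set Filter

/-- `u` belongs to `E_N` with weak derivative `g`. -/
def MemEN (N : ℕ) (u g : ℝ → ℝ) : Prop :=
  (∀ s ∈ Set.Icc (0:ℝ) 1, u s = ∫ t in (0:ℝ)..s, g t) ∧
  u 0 = 0 ∧
  IntervalIntegrable g MeasureTheory.volume 0 1 ∧
  MeasureTheory.IntegrableOn (fun t => |g t| ^ N) (Set.Ioc (0:ℝ) 1) ∧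
  (∫ t in Set.Ioc (0:ℝ) 1, |g t| ^ N) = 1

theorem integral_abs_le_rpow_mul_measureReal_univ {α : Type*} [MeasurableSpace α]
    {μ : Measure α} [IsFiniteMeasure μ] {p : ℝ} (hp : 1 < p) {g : α → ℝ}
    (hg : MemLp g (ENNReal.ofReal p) μ) :
    ∫ x, |g x| ∂μ ≤ (∫ x, |g x| ^ p ∂μ) ^ (1 / p) * μ.real univ ^ (1 - 1 / p) := by
  have hpq : p.HolderConjugate p.conjExponent := .conjExponent hp
  have h := integral_mul_le_Lp_mul_Lq_of_nonneg hpq (ae_of_all _ fun x => abs_nonneg (g x))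
    (ae_of_all _ fun _ => zero_le_one) hg.abs (memLp_const 1)
  simpa [hpq.one_sub_inv] using h

namespace MemEN

variable {N : ℕ} {u g : ℝ → ℝ}

theorem continuousOn (h : MemEN N u g) : ContinuousOn u (Icc 0 1) := by
  have hprim := intervalIntegral.continuousOn_primitive_interval' h.2.2.1 left_mem_uIcc
  rw [uIcc_of_le zero_le_one] at hprim
  exact hprim.congr h.1

theorem abs_le_rpow (h : MemEN N u g) (hN : 1 < N) {s : ℝ} (hs : s ∈ Ioc 0 1) :
    |u s| ≤ s ^ (1 - 1 / (N : ℝ)) := by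
  obtain ⟨hu, -, hg, hgN, hg1⟩ := h
  have hsub : Ioc 0 s ⊆ Ioc (0 : ℝ) 1 := Ioc_subset_Ioc_right hs.2
  have hmem : MemLp g (ENNReal.ofReal N) (volume.restrict (Ioc 0 s)) := by
    refine (integrable_norm_rpow_iff (hg.1.mono_set hsub).aestronglyMeasurable
      (by simp; omega) (by simp)).1 ?_
    simp only [ENNReal.toReal_ofReal N.cast_nonneg, Real.rpow_natCast, Real.norm_eq_abs]
    exact hgN.mono_set hsub
  have hnorm : ∫ t in Ioc 0 s, |g t| ^ (N : ℝ) ≤ 1 := by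
    rw [← hg1]
    simpa using setIntegral_mono_set hgN (ae_of_all _ fun t => by positivity) hsub.eventuallyLE
  calc |u s| = |∫ t in (0 : ℝ)..s, g t| := by rw [hu s (Ioc_subset_Icc_self hs)]
    _ ≤ ∫ t in (0 : ℝ)..s, |g t| := intervalIntegral.abs_integral_le_integral_abs hs.1.le
    _ = ∫ t in Ioc 0 s, |g t| := intervalIntegral.integral_of_le hs.1.le
    _ ≤ (∫ t in Ioc 0 s, |g t| ^ (N : ℝ)) ^ (1 / (N : ℝ)) *
        (volume.restrict (Ioc 0 s)).real univ ^ (1 - 1 / (N : ℝ)) :=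
      integral_abs_le_rpow_mul_measureReal_univ (by exact_mod_cast hN) hmem
    _ ≤ 1 * s ^ (1 - 1 / (N : ℝ)) := by
      rw [measureReal_restrict_apply_univ, Real.volume_real_Ioc_of_le hs.1.le, sub_zero]
      exact mul_le_mul_of_nonneg_right (rpow_le_one (by positivity) hnorm (by positivity))
        (rpow_nonneg hs.1.le _)
    _ = s ^ (1 - 1 / (N : ℝ)) := one_mul _

theorem pow_le_pow_pred (h : MemEN N u g) (hN : 1 < N) {s : ℝ} (hs : s ∈ Ioc 0 1) :
    u s ^ N ≤ s ^ (N - 1) :=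
  calc u s ^ N ≤ |u s| ^ N := (le_abs_self _).trans (abs_pow _ _).le
    _ ≤ (s ^ (1 - 1 / (N : ℝ))) ^ N := pow_le_pow_left₀ (abs_nonneg _) (h.abs_le_rpow hN hs) N
    _ = s ^ (N - 1) := by
      rw [← rpow_natCast, ← rpow_mul hs.1.le, ← rpow_natCast, Nat.cast_sub hN.le, Nat.cast_one]
      field_simp

theorem continuousOn_exp_mul_log_mul (h : MemEN N u g) (β : ℝ) :
    ContinuousOn (fun s => exp (β * log (exp 1 / s) * (u s ^ N / s ^ (N - 1)))) (Ioc 0 1) := by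
  have hu := h.continuousOn.mono Ioc_subset_Icc_self
  have hs : ∀ s ∈ Ioc (0 : ℝ) 1, s ≠ 0 := fun s hs => hs.1.ne'
  fun_prop (disch := simp_all)

end MemEN

theorem exp_mul_log_exp_one_div_mul_le {β r s : ℝ} (hβ : 0 ≤ β) (hr : r ≤ 1) (hs : s ∈ Ioc 0 1) :
    exp (β * log (exp 1 / s) * r) ≤ exp 1 ^ β * s ^ (-β) := by
  have hlog : log (exp 1 / s) = 1 - log s := by
    rw [log_div (exp_ne_zero 1) hs.1.ne', log_exp]
  have hlog_nonneg : 0 ≤ log (exp 1 / s) := by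
    rw [hlog]
    linarith [log_nonpos hs.1.le hs.2]
  calc exp (β * log (exp 1 / s) * r) ≤ exp (β * log (exp 1 / s)) :=
        exp_le_exp.2 (mul_le_of_le_one_right (by positivity) hr)
    _ = exp 1 ^ β * s ^ (-β) := by
        rw [hlog, rpow_def_of_pos hs.1, exp_one_rpow, ← exp_add]
        ring_nf

/-- the subcritical Limiting-Bliss inequality: for `0 < β < 1` there is a
constant `C = C(N, β)` with `∫₀¹ e^{β log(e/s) v(s)^N / s^{N-1}} ds ≤ C` for all `v ∈ E_N`. -/
theorem limiting_bliss_subcritical (N : ℕ) (hN : 2 ≤ N) (β : ℝ) (hβ0 : 0 < β) (hβ1 : β < 1) :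
    ∃ C : ℝ, ∀ u g : ℝ → ℝ, MemEN N u g →
      (∫ s in Set.Ioc (0:ℝ) 1,
        Real.exp (β * Real.log (Real.exp 1 / s) * (u s ^ N / s ^ (N - 1)))) ≤ C := by
  refine ⟨∫ s in Ioc (0 : ℝ) 1, exp 1 ^ β * s ^ (-β), fun u g hug => ?_⟩
  have hbound : ∀ s ∈ Ioc (0 : ℝ) 1,
      exp (β * log (exp 1 / s) * (u s ^ N / s ^ (N - 1))) ≤ exp 1 ^ β * s ^ (-β) :=
    fun s hs => exp_mul_log_exp_one_div_mul_le hβ0.le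
      ((div_le_one (pow_pos hs.1 _)).2 (hug.pow_le_pow_pred hN hs)) hs
  have hdom : IntegrableOn (fun s : ℝ => exp 1 ^ β * s ^ (-β)) (Ioc 0 1) :=
    (intervalIntegral.intervalIntegrable_rpow' (by linarith)).1.const_mul _
  have hint : IntegrableOn (fun s => exp (β * log (exp 1 / s) * (u s ^ N / s ^ (N - 1))))
      (Ioc 0 1) :=
    hdom.mono' ((hug.continuousOn_exp_mul_log_mul β).aestronglyMeasurable measurableSet_Ioc)
      ((ae_restrict_iff' measurableSet_Ioc).2 <| ae_of_all _ fun s hs => by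
        rw [norm_of_nonneg (exp_pos _).le]
        exact hbound s hs)
  exact setIntegral_mono_on hint hdom measurableSet_Ioc hbound
end

section
/- Let N ≥ 2 be an integer and β > 1. Then sup_{v ∈ E_N} ∫₀¹ exp( β · log(e/s) · v(s)^N / s^{N−1} ) ds = +∞; more precisely, with β = 1 + δ, δ > 0, for the infinitesimal Moser sequence w_j one has ∫₀¹ e^{β (log(e/s)) w_j^N(s)/s^{N−1}} ds ≥ (e^{1+δ}/(1+δ)) · j^δ/log(je) − (1/(j(1+δ)log(je))) → +∞ as j → ∞. -/
/-!
On `(0, 1/j]` the Moser function satisfies `w_j(s)^N / s^(N-1) = j s` and `log (e/s) ≥ log (j e)`,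
so the integrand dominates `exp (c s)` with `c = (1 + δ) j log (j e)`; integrating this exponential
gives the lower bound, which grows like `j^δ / log j`. On all of `(0, 1]` the quotient is at most
`j s`, and `s (1 - log s) ≤ 1` bounds the integrand by `exp ((1 + δ) j)`, so the integral is finite.
-/

open MeasureTheory Real Set Filter

noncomputable def blissIntegrand (N : ℕ) (β : ℝ) (v : ℝ → ℝ) (s : ℝ) : ℝ :=
  exp (β * log (exp 1 / s) * (v s ^ N / s ^ (N - 1)))

theorem mul_one_sub_log_le_one {s : ℝ} (hs : 0 < s) : s * (1 - log s) ≤ 1 :=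
  calc s * (1 - log s) ≤ s * s⁻¹ := by gcongr; linarith [one_sub_inv_le_log_of_pos hs]
    _ = 1 := mul_inv_cancel₀ hs.ne'

theorem one_le_log_mul_exp_one {x : ℝ} (hx : 1 ≤ x) : 1 ≤ log (x * exp 1) := by
  rw [log_mul (by positivity) (exp_ne_zero 1), log_exp]
  linarith [log_nonneg hx]

theorem measurable_blissIntegrand (N : ℕ) (β : ℝ) {v : ℝ → ℝ} (hv : Measurable v) :
    Measurable (blissIntegrand N β v) := by
  unfold blissIntegrand
  fun_prop

theorem blissIntegrand_le {N : ℕ} {β K s : ℝ} {v : ℝ → ℝ} (hβ : 0 ≤ β) (hK : 0 ≤ K)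
    (hs : s ∈ Ioc (0 : ℝ) 1) (hv : v s ^ N / s ^ (N - 1) ≤ K * s) :
    blissIntegrand N β v s ≤ exp (β * K) := by
  have hlog : 0 ≤ log (exp 1 / s) := log_nonneg <| by
    rw [le_div_iff₀ hs.1, one_mul]; linarith [hs.2, add_one_le_exp 1]
  refine exp_le_exp.2 ?_
  calc β * log (exp 1 / s) * (v s ^ N / s ^ (N - 1)) ≤ β * log (exp 1 / s) * (K * s) := by
        gcongr
    _ = β * K * (s * (1 - log s)) := by
        rw [log_div (exp_ne_zero 1) hs.1.ne', log_exp]; ring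
    _ ≤ β * K := mul_le_of_le_one_right (by positivity) (mul_one_sub_log_le_one hs.1)

theorem integrableOn_blissIntegrand {N : ℕ} {β K : ℝ} {v : ℝ → ℝ} (hv : Measurable v)
    (hβ : 0 ≤ β) (hK : 0 ≤ K) (hbound : ∀ s ∈ Ioc (0 : ℝ) 1, v s ^ N / s ^ (N - 1) ≤ K * s) :
    IntegrableOn (blissIntegrand N β v) (Ioc 0 1) :=
  (integrableOn_const (C := exp (β * K)) measure_Ioc_lt_top.ne).mono'
    (measurable_blissIntegrand N β hv).aestronglyMeasurable <|
    ae_restrict_of_forall_mem measurableSet_Ioc fun s hs =>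
      (norm_of_nonneg (exp_pos _).le).trans_le (blissIntegrand_le hβ hK hs (hbound s hs))

theorem le_Ifun_of_forall_le {N : ℕ} {β c a : ℝ} {v : ℝ → ℝ} (hc : 0 < c) (ha : 0 ≤ a)
    (ha1 : a ≤ 1) (hint : IntegrableOn (blissIntegrand N β v) (Ioc 0 1))
    (hle : ∀ s ∈ Ioc 0 a, c * s ≤ β * log (exp 1 / s) * (v s ^ N / s ^ (N - 1))) :
    (exp (c * a) - 1) / c ≤ Ifun N β v := by
  have hsub : Ioc 0 a ⊆ Ioc (0 : ℝ) 1 := Ioc_subset_Ioc_right ha1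
  have hexp : ∫ s in Ioc 0 a, exp (c * s) = (exp (c * a) - 1) / c := by
    rw [← intervalIntegral.integral_of_le ha,
      intervalIntegral.integral_comp_mul_left (fun x => exp x) hc.ne', integral_exp, mul_zero,
      exp_zero, smul_eq_mul, inv_mul_eq_div]
  calc (exp (c * a) - 1) / c = ∫ s in Ioc 0 a, exp (c * s) := hexp.symm
    _ ≤ ∫ s in Ioc 0 a, blissIntegrand N β v s :=
        setIntegral_mono_on (by fun_prop : Continuous fun s => exp (c * s)).integrableOn_Ioc
          (hint.mono_set hsub) measurableSet_Ioc fun s hs => exp_le_exp.2 (hle s hs)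
    _ ≤ Ifun N β v :=
        setIntegral_mono_set hint (ae_of_all _ fun s => (exp_pos _).le) hsub.eventuallyLE

theorem setIntegral_Ioc_indicator_Iic_const {a s : ℝ} (ha : 0 ≤ a) (hs : 0 ≤ s) (c : ℝ) :
    ∫ t in Ioc 0 s, (Iic a).indicator (fun _ => c) t = min s a * c := by
  rw [setIntegral_indicator measurableSet_Iic, Ioc_inter_Iic, setIntegral_const,
    Real.volume_real_Ioc_of_le (le_min hs ha), sub_zero, smul_eq_mul]

section Moser

variable {N j : ℕ}

theorem moser_eq_mul_min (hN : N ≠ 0) (hj : j ≠ 0) (t : ℝ) :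
    moser N j t = (j : ℝ) ^ ((1 : ℝ) / N) * min t (1 / j) := by
  have hj0 : (0 : ℝ) < j := by positivity
  unfold moser
  split_ifs with h
  · rw [min_eq_left h]
  · rw [min_eq_right (not_le.1 h).le, one_div (j : ℝ), ← rpow_neg_one, ← rpow_add hj0]
    congr 1
    field_simp
    ring

theorem continuous_moser (hN : N ≠ 0) (hj : j ≠ 0) : Continuous (moser N j) := by
  simp_rw [funext (moser_eq_mul_min hN hj)]
  fun_prop

theorem moser_pow (hN : N ≠ 0) (hj : j ≠ 0) (t : ℝ) :
    moser N j t ^ N = j * min t (1 / j) ^ N := by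
  rw [moser_eq_mul_min hN hj, mul_pow, one_div (N : ℝ), rpow_inv_natCast_pow (by positivity) hN]

theorem moser_pow_div_le (hN : N ≠ 0) (hj : j ≠ 0) {s : ℝ} (hs : 0 < s) :
    moser N j s ^ N / s ^ (N - 1) ≤ j * s := by
  obtain ⟨n, rfl⟩ : ∃ n, N = n + 1 := ⟨N - 1, by omega⟩
  rw [moser_pow hN hj, Nat.add_sub_cancel, div_le_iff₀ (by positivity)]
  calc (j : ℝ) * min s (1 / j) ^ (n + 1) ≤ j * s ^ (n + 1) := by
        gcongr
        exact min_le_left _ _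
    _ = j * s * s ^ n := by ring

theorem moser_pow_div_of_le (hN : N ≠ 0) (hj : j ≠ 0) {s : ℝ} (hs : 0 < s) (hsj : s ≤ 1 / j) :
    moser N j s ^ N / s ^ (N - 1) = j * s := by
  obtain ⟨n, rfl⟩ : ∃ n, N = n + 1 := ⟨N - 1, by omega⟩
  rw [moser_pow hN hj, min_eq_left hsj, Nat.add_sub_cancel]
  field_simp
  ring

noncomputable def moserDeriv (N j : ℕ) : ℝ → ℝ :=
  (Iic (1 / (j : ℝ))).indicator fun _ => (j : ℝ) ^ ((1 : ℝ) / N)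

theorem intervalIntegrable_moserDeriv (a b : ℝ) : IntervalIntegrable (moserDeriv N j) volume a b :=
  ⟨IntegrableOn.indicator (integrableOn_const measure_Ioc_lt_top.ne) measurableSet_Iic,
    IntegrableOn.indicator (integrableOn_const measure_Ioc_lt_top.ne) measurableSet_Iic⟩

theorem integral_moserDeriv (hN : N ≠ 0) (hj : j ≠ 0) {s : ℝ} (hs : 0 ≤ s) :
    ∫ t in (0 : ℝ)..s, moserDeriv N j t = moser N j s := by
  rw [intervalIntegral.integral_of_le hs, moserDeriv,
    setIntegral_Ioc_indicator_Iic_const (by positivity) hs, moser_eq_mul_min hN hj, mul_comm]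

theorem abs_moserDeriv_pow (hN : N ≠ 0) :
    (fun t => |moserDeriv N j t| ^ N) = (Iic (1 / (j : ℝ))).indicator fun _ => (j : ℝ) := by
  funext t
  by_cases ht : t ∈ Iic (1 / (j : ℝ))
  · rw [moserDeriv, indicator_of_mem ht, indicator_of_mem ht, abs_of_nonneg (by positivity),
      one_div (N : ℝ), rpow_inv_natCast_pow (by positivity) hN]
  · rw [moserDeriv, indicator_of_notMem ht, indicator_of_notMem ht, abs_zero, zero_pow hN]

theorem memEN_moser (hN : N ≠ 0) (hj : j ≠ 0) : MemEN N (moser N j) (moserDeriv N j) := by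
  have hj1 : 1 / (j : ℝ) ≤ 1 := by
    rw [div_le_one (by positivity)]; exact_mod_cast Nat.one_le_iff_ne_zero.2 hj
  refine ⟨fun s hs => (integral_moserDeriv hN hj hs.1).symm, ?_,
    intervalIntegrable_moserDeriv 0 1, ?_, ?_⟩
  · rw [moser_eq_mul_min hN hj, min_eq_left (by positivity), mul_zero]
  · rw [abs_moserDeriv_pow hN]
    exact IntegrableOn.indicator (integrableOn_const measure_Ioc_lt_top.ne) measurableSet_Iic
  · rw [abs_moserDeriv_pow hN, setIntegral_Ioc_indicator_Iic_const (by positivity) zero_le_one,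
      min_eq_right hj1, one_div_mul_cancel (by positivity)]

end Moser

noncomputable def moserLowerBound (δ : ℝ) (j : ℕ) : ℝ :=
  exp (1 + δ) / (1 + δ) * ((j : ℝ) ^ δ / log ((j : ℝ) * exp 1)) -
    1 / ((j : ℝ) * ((1 + δ) * log ((j : ℝ) * exp 1)))

theorem moserLowerBound_le_Ifun {N j : ℕ} (hN : N ≠ 0) (hj : j ≠ 0) {δ : ℝ} (hδ : 0 < δ) :
    moserLowerBound δ j ≤ Ifun N (1 + δ) (moser N j) := by
  have hj0 : (0 : ℝ) < j := by positivity
  have hj1 : (1 : ℝ) ≤ j := by exact_mod_cast Nat.one_le_iff_ne_zero.2 hj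
  set L := log ((j : ℝ) * exp 1) with hL
  have hL1 : 1 ≤ L := one_le_log_mul_exp_one hj1
  set c := (1 + δ) * L * j with hc
  have hint : IntegrableOn (blissIntegrand N (1 + δ) (moser N j)) (Ioc 0 1) :=
    integrableOn_blissIntegrand (continuous_moser hN hj).measurable (by positivity) hj0.le
      fun s hs => moser_pow_div_le hN hj hs.1
  have hle : ∀ s ∈ Ioc 0 (1 / (j : ℝ)),
      c * s ≤ (1 + δ) * log (exp 1 / s) * (moser N j s ^ N / s ^ (N - 1)) := by
    intro s ⟨hs, hsj⟩
    have hjs : s * j ≤ 1 := (le_div_iff₀ hj0).1 hsj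
    have hLs : L ≤ log (exp 1 / s) := log_le_log (by positivity) <| by
      rw [le_div_iff₀ hs]; nlinarith [exp_pos 1]
    rw [moser_pow_div_of_le hN hj hs hsj]
    calc c * s = (1 + δ) * L * (j * s) := by ring
      _ ≤ _ := by gcongr
  have hexp : exp (c * (1 / j)) = exp (1 + δ) * j * j ^ δ := by
    rw [show c * (1 / j) = (1 + δ) + log j + log j * δ by
        rw [hc, hL, log_mul hj0.ne' (exp_ne_zero 1), log_exp]; field_simp; ring,
      exp_add, exp_add, exp_log hj0, rpow_def_of_pos hj0]
  have hbound : moserLowerBound δ j = (exp (c * (1 / j)) - 1) / c := by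
    have hL0 : L ≠ 0 := by linarith
    rw [hexp, moserLowerBound, ← hL, hc]
    field_simp
  rw [hbound]
  exact le_Ifun_of_forall_le (by positivity) (by positivity) (by rwa [div_le_one hj0]) hint hle

theorem tendsto_rpow_div_log_mul_exp_atTop {δ : ℝ} (hδ : 0 < δ) :
    Tendsto (fun x : ℝ => x ^ δ / log (x * exp 1)) atTop atTop := by
  have hlog : Tendsto (fun x : ℝ => log (x * exp 1)) atTop atTop :=
    tendsto_log_atTop.comp (tendsto_id.atTop_mul_const (exp_pos 1))
  refine (((tendsto_exp_mul_div_rpow_atTop 1 δ hδ).comp hlog).const_mul_atTop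
    (exp_pos (-δ))).congr' ?_
  filter_upwards [eventually_gt_atTop 0] with x hx
  rw [Function.comp_apply, rpow_one, log_mul hx.ne' (exp_ne_zero 1), log_exp,
    rpow_def_of_pos hx, mul_div_assoc', ← exp_add]
  ring_nf

theorem tendsto_moserLowerBound_atTop {δ : ℝ} (hδ : 0 < δ) :
    Tendsto (moserLowerBound δ) atTop atTop := by
  have hmain : Tendsto (fun j : ℕ => exp (1 + δ) / (1 + δ) * ((j : ℝ) ^ δ / log (j * exp 1)) - 1)
      atTop atTop :=
    tendsto_atTop_add_const_right _ _ <|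
      ((tendsto_rpow_div_log_mul_exp_atTop hδ).comp tendsto_natCast_atTop_atTop).const_mul_atTop
        (by positivity)
  refine tendsto_atTop_mono' _ ?_ hmain
  filter_upwards [eventually_ge_atTop 1] with j hj
  have hj1 : (1 : ℝ) ≤ j := by exact_mod_cast hj
  have hden : 1 ≤ (j : ℝ) * ((1 + δ) * log (j * exp 1)) :=
    one_le_mul_of_one_le_of_one_le hj1 <|
      one_le_mul_of_one_le_of_one_le (by linarith) (one_le_log_mul_exp_one hj1)
  have hsmall : 1 / ((j : ℝ) * ((1 + δ) * log (j * exp 1))) ≤ 1 :=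
    (div_le_one (by linarith)).2 hden
  unfold moserLowerBound
  linarith

/-- the supercritical Limiting-Bliss inequality fails: writing `β = 1 + δ`
with `δ > 0`, along the infinitesimal Moser sequence one has the explicit lower bound
`I_β(w_j) ≥ (e^{1+δ}/(1+δ)) · j^δ / log (j e) − 1/(j (1+δ) log(j e)) → ∞`; in particular
the supremum of `I_β` over `E_N` is infinite. -/
theorem limiting_bliss_supercritical (N : ℕ) (hN : 2 ≤ N) (δ : ℝ) (hδ : 0 < δ) :
    (∀ j : ℕ, 1 ≤ j →
      Real.exp (1 + δ) / (1 + δ) * ((j : ℝ) ^ δ / Real.log ((j : ℝ) * Real.exp 1)) -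
        1 / ((j : ℝ) * ((1 + δ) * Real.log ((j : ℝ) * Real.exp 1))) ≤
        Ifun N (1 + δ) (moser N j)) ∧
    Filter.Tendsto (fun j : ℕ => Ifun N (1 + δ) (moser N j)) Filter.atTop Filter.atTop ∧
    (∀ C : ℝ, ∃ u g : ℝ → ℝ, MemEN N u g ∧ C < Ifun N (1 + δ) u) := by
  have hN0 : N ≠ 0 := by omega
  have hbound : ∀ j : ℕ, 1 ≤ j → moserLowerBound δ j ≤ Ifun N (1 + δ) (moser N j) :=
    fun j hj => moserLowerBound_le_Ifun hN0 (by omega) hδ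
  have htend : Tendsto (fun j : ℕ => Ifun N (1 + δ) (moser N j)) atTop atTop :=
    tendsto_atTop_mono' _ ((eventually_ge_atTop 1).mono hbound) (tendsto_moserLowerBound_atTop hδ)
  refine ⟨hbound, htend, fun C => ?_⟩
  obtain ⟨j, hjC, hj⟩ := ((htend.eventually_gt_atTop C).and (eventually_ge_atTop 1)).exists
  exact ⟨moser N j, moserDeriv N j, memEN_moser hN0 (by omega), hjC⟩
end
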